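/- Let p > −1/2 and define the equivalence relation ≈ on 𝒫ₚ by: (P,ψ) ≈ (P̃,ψ̃) iff κ₁ = κ̃₁, det P = det P̃, and ψ − ψ̃ = (2p/κ₁)·(κ₃ − κ̃₃), where P = [[κ₁,κ₃],[κ₃,κ₂]] and P̃ = [[κ̃₁,κ̃₃],[κ̃₃,κ̃₂]]. Then: (i) the set {(P,ψ) ∈ 𝒫ₚ : κ₃ = 0} is a complete system of representatives of 𝒫ₚ modulo ≈, i.e. every (P,ψ) ∈ 𝒫ₚ is ≈-equivalent to exactly one element of this set; (ii) if p ≠ 0, the set {(P,ψ) ∈ 𝒫ₚ : ψ = 0} is likewise a complete system of representatives of 𝒫ₚ modulo ≈. -/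

import Mathlib

open Matrix MeasureTheory Filter

noncomputable section

def matJ : Matrix (Fin 2) (Fin 2) ℝ := !![0, -1; 1, 0]

def Dpsi (p ψ a : ℝ) : Matrix (Fin 2) (Fin 2) ℝ :=
  if p = 0 then !![1, 0; ψ * Real.log a, 1]
  else !![1, 0; ψ / (2 * p), 1] * !![a ^ p, 0; 0, a ^ (-p)] * !![1, 0; -ψ / (2 * p), 1]

def HPpsi (p ψ : ℝ) (P : Matrix (Fin 2) (Fin 2) ℝ) (a : ℝ) : Matrix (Fin 2) (Fin 2) ℝ :=
  Dpsi p ψ a * P * (Dpsi p ψ a)ᵀ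

def SatRec (p : ℝ) (P : Matrix (Fin 2) (Fin 2) ℝ) (ψ : ℝ) (α β : ℕ → ℝ) : Prop :=
  α 0 = 1 ∧ β 0 = 0 ∧ ∀ n : ℕ,
    !![α (n + 1), β (n + 1)] =
      (-1 / (((n : ℝ) + 1) * (2 * p + (n : ℝ) + 1))) •
        (!![α n, β n] * (P * matJ * !![2 * p + (n : ℝ) + 1, 0; ψ, (n : ℝ) + 1]))

def genF (c : ℕ → ℝ) (z : ℂ) : ℂ := ∑' n : ℕ, (c n : ℂ) * z ^ n

def rowAB (p ψ : ℝ) (α β : ℕ → ℝ) (a : ℝ) (z : ℂ) : Matrix (Fin 1) (Fin 2) ℂ :=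
  !![((a ^ p : ℝ) : ℂ) * genF α ((a : ℂ) * z), ((a ^ p : ℝ) : ℂ) * genF β ((a : ℂ) * z)] *
    ((Dpsi p ψ a)⁻¹).map Complex.ofReal

/-- The parameter class 𝒫ₚ. -/
def PClass (p : ℝ) (P : Matrix (Fin 2) (Fin 2) ℝ) (ψ : ℝ) : Prop :=
  P.PosSemidef ∧
    ((p ≠ 0 ∧ P.mulVec ![1, 0] ≠ 0 ∧ P.mulVec ![-ψ, 2 * p] ≠ 0) ∨
     (p = 0 ∧ ((LinearMap.ker P.mulVecLin = ⊥ ∧ ψ = 0) ∨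
               (P.mulVec ![1, 0] ≠ 0 ∧ ψ ≠ 0))))
/-- The equivalence relation ≈ on 𝒫ₚ (equality of homogeneous spaces). -/
def approxRel (p : ℝ) (Pψ Qφ : Matrix (Fin 2) (Fin 2) ℝ × ℝ) : Prop :=
  Pψ.1 0 0 = Qφ.1 0 0 ∧ Pψ.1.det = Qφ.1.det ∧
    Pψ.2 - Qφ.2 = 2 * p / Pψ.1 0 0 * (Pψ.1 0 1 - Qφ.1 0 1)

/-!
The relation `≈` says precisely that `κ₁`, `det P` and `ψ - 2pκ₃/κ₁` agree. For symmetric `P`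
with `κ₁ > 0`, membership in `𝒫ₚ` depends only on these three numbers: `P` is positive
semidefinite iff `det P ≥ 0`, and the kernel conditions say `det P ≠ 0` or `ψ - 2pκ₃/κ₁ ≠ 0`.
Hence the `≈`-class of `(P, ψ)` inside `𝒫ₚ` is parametrized bijectively by `κ₃ ∈ ℝ`, with `κ₂`
and `ψ` recovered from `κ₃`. The condition `κ₃ = 0` selects one parameter, and so does `ψ = 0`
when `p ≠ 0`, since `ψ` is then affine in `κ₃` with slope `2p/κ₁ ≠ 0`.
-/

namespace Matrix

section Field

variable {K : Type*} [Field K]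

lemma det_of_fin_two_symm (a t d : K) (ha : a ≠ 0) :
    (!![a, t; t, (d + t * t) / a]).det = d := by
  rw [det_fin_two_of]
  field_simp
  ring

lemma ker_mulVecLin_eq_bot_iff_det_ne_zero {n : Type*} [Fintype n] [DecidableEq n]
    {A : Matrix n n K} : LinearMap.ker A.mulVecLin = ⊥ ↔ A.det ≠ 0 := by
  rw [ker_mulVecLin_eq_bot_iff, Ne, ← exists_mulVec_eq_zero_iff]
  push Not
  exact forall_congr' fun v => by tauto

variable [StarRing K] [TrivialStar K]

lemma IsHermitian.apply_one_zero {A : Matrix (Fin 2) (Fin 2) K} (hA : A.IsHermitian) :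
    A 1 0 = A 0 1 := by
  simpa using (hA.apply 1 0).symm

lemma isHermitian_of_fin_two (a b c : K) : (!![a, b; b, c]).IsHermitian := by
  ext i j
  fin_cases i <;> fin_cases j <;> simp

lemma IsHermitian.eq_of_fin_two {A : Matrix (Fin 2) (Fin 2) K} (hA : A.IsHermitian)
    (h : A 0 0 ≠ 0) : A = !![A 0 0, A 0 1; A 0 1, (A.det + A 0 1 * A 0 1) / A 0 0] := by
  have h10 := hA.apply_one_zero
  rw [det_fin_two, h10]
  conv_lhs => rw [eta_fin_two A, h10]
  congr
  field_simp
  ring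

end Field

lemma PosSemidef.apply_zero_one_eq_zero {A : Matrix (Fin 2) (Fin 2) ℝ}
    (hA : A.PosSemidef) (h : A 0 0 = 0) : A 0 1 = 0 := by
  have hdet := hA.det_nonneg
  rw [det_fin_two, h, hA.1.apply_one_zero] at hdet
  exact mul_self_eq_zero.mp (le_antisymm (by linarith) (mul_self_nonneg _))

lemma PosSemidef.det_eq_zero_of_apply_zero_zero {A : Matrix (Fin 2) (Fin 2) ℝ}
    (hA : A.PosSemidef) (h : A 0 0 = 0) : A.det = 0 := by
  rw [det_fin_two, h, hA.1.apply_one_zero, hA.apply_zero_one_eq_zero h]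
  ring

lemma PosSemidef.mulVec_one_zero_ne_zero_iff {A : Matrix (Fin 2) (Fin 2) ℝ}
    (hA : A.PosSemidef) : A *ᵥ ![1, 0] ≠ 0 ↔ 0 < A 0 0 := by
  rw [hA.diag_nonneg.lt_iff_ne', Ne, Ne, not_iff_not, mulVec_fin_two, hA.1.apply_one_zero]
  constructor
  · intro h
    simpa using congrFun h 0
  · intro h
    ext i
    fin_cases i <;> simp [h, hA.apply_zero_one_eq_zero h]

lemma posSemidef_fin_two_iff {A : Matrix (Fin 2) (Fin 2) ℝ} (h : 0 < A 0 0) :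
    A.PosSemidef ↔ A.IsHermitian ∧ 0 ≤ A.det := by
  refine ⟨fun hA => ⟨hA.1, hA.det_nonneg⟩, fun ⟨hA, hdet⟩ => ?_⟩
  refine .of_dotProduct_mulVec_nonneg hA fun x => ?_
  have hq : star x ⬝ᵥ (A *ᵥ x) =
      A 0 0 * x 0 ^ 2 + 2 * A 0 1 * x 0 * x 1 + A 1 1 * x 1 ^ 2 := by
    simp only [star_trivial, dotProduct, Fin.sum_univ_two, mulVec_fin_two, hA.apply_one_zero,
      cons_val_zero, cons_val_one]
    ring
  rw [det_fin_two, hA.apply_one_zero] at hdet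
  rw [hq]
  -- completing the square: `κ₁ · q(x) = (κ₁x₀ + κ₃x₁)² + det A · x₁²`
  nlinarith [sq_nonneg (A 0 0 * x 0 + A 0 1 * x 1), mul_nonneg hdet (sq_nonneg (x 1))]

end Matrix

/-- The invariant of `≈` besides `κ₁` and `det P`; it is the `ψ` of the representative with
`κ₃ = 0`. -/
def psiInvariant (p : ℝ) (P : Matrix (Fin 2) (Fin 2) ℝ) (ψ : ℝ) : ℝ :=
  ψ - 2 * p / P 0 0 * P 0 1

/-- The element of the `≈`-class of `(P, ψ)` whose matrix has off-diagonal entry `t`. -/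
def offDiagRep (p : ℝ) (P : Matrix (Fin 2) (Fin 2) ℝ) (ψ t : ℝ) :
    Matrix (Fin 2) (Fin 2) ℝ × ℝ :=
  (!![P 0 0, t; t, (P.det + t * t) / P 0 0], psiInvariant p P ψ + 2 * p / P 0 0 * t)

section ParameterClass

variable {p ψ φ : ℝ} {P Q : Matrix (Fin 2) (Fin 2) ℝ}

lemma mulVec_eq_zero_iff_det_eq_zero_and_psiInvariant_eq_zero (hP : P.IsHermitian)
    (h0 : P 0 0 ≠ 0) (hp : p ≠ 0) :
    P *ᵥ ![-ψ, 2 * p] = 0 ↔ P.det = 0 ∧ psiInvariant p P ψ = 0 := by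
  have hι : psiInvariant p P ψ = 0 ↔ P 0 0 * -ψ + P 0 1 * (2 * p) = 0 := by
    unfold psiInvariant
    constructor <;> intro h
    · field_simp at h
      linarith
    · field_simp
      linarith
  rw [hι, mulVec_fin_two, det_fin_two, hP.apply_one_zero]
  simp only [cons_val_zero, cons_val_one, funext_iff, Fin.forall_fin_two, Pi.zero_apply]
  constructor
  · rintro ⟨h1, h2⟩
    refine ⟨?_, h1⟩
    have : 2 * p * (P 0 0 * P 1 1 - P 0 1 * P 0 1) = 0 := by
      linear_combination P 0 0 * h2 - P 0 1 * h1
    simpa [hp] using this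
  · rintro ⟨hdet, h1⟩
    refine ⟨h1, ?_⟩
    have : P 0 0 * (P 0 1 * -ψ + P 1 1 * (2 * p)) = 0 := by
      linear_combination P 0 1 * h1 + 2 * p * hdet
    simpa [h0] using this

theorem pClass_iff : PClass p P ψ ↔
    P.PosSemidef ∧ 0 < P 0 0 ∧ (P.det ≠ 0 ∨ psiInvariant p P ψ ≠ 0) := by
  unfold PClass
  refine and_congr_right fun hP => ?_
  rw [hP.mulVec_one_zero_ne_zero_iff]
  rcases eq_or_ne p 0 with rfl | hp
  · have hpos : P.det ≠ 0 → 0 < P 0 0 := fun hdet =>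
      hP.diag_nonneg.lt_of_ne' fun h => hdet (hP.det_eq_zero_of_apply_zero_zero h)
    simp only [psiInvariant, mul_zero, zero_div, zero_mul, sub_zero,
      ker_mulVecLin_eq_bot_iff_det_ne_zero]
    tauto
  · simp only [hp, Ne, not_false_eq_true, true_and, false_and, or_false]
    refine and_congr_right fun h0 => ?_
    rw [mulVec_eq_zero_iff_det_eq_zero_and_psiInvariant_eq_zero hP.1 h0.ne' hp]
    tauto

lemma PClass.apply_zero_zero_pos (h : PClass p P ψ) : 0 < P 0 0 :=
  (pClass_iff.mp h).2.1

lemma approxRel_iff : approxRel p (P, ψ) (Q, φ) ↔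
    P 0 0 = Q 0 0 ∧ P.det = Q.det ∧ psiInvariant p P ψ = psiInvariant p Q φ := by
  unfold approxRel psiInvariant
  dsimp only
  refine and_congr_right fun h0 => and_congr_right fun _ => ?_
  rw [← h0]
  constructor <;> intro h <;> linarith

lemma PClass.of_approxRel (h : PClass p P ψ) (hQ : Q.IsHermitian)
    (hR : approxRel p (P, ψ) (Q, φ)) : PClass p Q φ := by
  obtain ⟨h0, hdet, hι⟩ := approxRel_iff.mp hR
  obtain ⟨hP, hpos, hnd⟩ := pClass_iff.mp h
  rw [posSemidef_fin_two_iff hpos] at hP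
  rw [h0] at hpos
  rw [pClass_iff, posSemidef_fin_two_iff hpos, ← hdet, ← hι]
  exact ⟨⟨hQ, hP.2⟩, hpos, hnd⟩

lemma approxRel_offDiagRep (h0 : P 0 0 ≠ 0) (t : ℝ) :
    approxRel p (P, ψ) (offDiagRep p P ψ t) := by
  refine ⟨by simp [offDiagRep], det_of_fin_two_symm _ _ _ h0 |>.symm, ?_⟩
  simp only [offDiagRep, psiInvariant, of_apply, cons_val', cons_val_zero, cons_val_one,
    empty_val', cons_val_fin_one]
  ring

lemma PClass.pClass_offDiagRep (h : PClass p P ψ) (t : ℝ) :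
    PClass p (offDiagRep p P ψ t).1 (offDiagRep p P ψ t).2 :=
  h.of_approxRel (isHermitian_of_fin_two _ _ _) (approxRel_offDiagRep h.apply_zero_zero_pos.ne' t)

lemma eq_offDiagRep_of_approxRel (h0 : P 0 0 ≠ 0) (hQ : Q.IsHermitian)
    (hR : approxRel p (P, ψ) (Q, φ)) : (Q, φ) = offDiagRep p P ψ (Q 0 1) := by
  obtain ⟨h00, hdet, hι⟩ := approxRel_iff.mp hR
  rw [h00] at h0
  rw [offDiagRep, hι, h00, hdet, ← hQ.eq_of_fin_two h0, Prod.mk.injEq]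
  refine ⟨rfl, ?_⟩
  unfold psiInvariant
  ring

theorem PClass.existsUnique_approxRel (h : PClass p P ψ)
    (S : Matrix (Fin 2) (Fin 2) ℝ × ℝ → Prop) (hS : ∃! t, S (offDiagRep p P ψ t)) :
    ∃! Qφ : Matrix (Fin 2) (Fin 2) ℝ × ℝ,
      (PClass p Qφ.1 Qφ.2 ∧ S Qφ) ∧ approxRel p (P, ψ) Qφ := by
  have h0 := h.apply_zero_zero_pos.ne'
  obtain ⟨t, ht, huniq⟩ := hS
  refine ⟨offDiagRep p P ψ t,
    ⟨⟨h.pClass_offDiagRep t, ht⟩, approxRel_offDiagRep h0 t⟩, ?_⟩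
  rintro ⟨Q, φ⟩ ⟨⟨hQ, hSQ⟩, hR⟩
  rw [eq_offDiagRep_of_approxRel h0 (pClass_iff.mp hQ).1.1 hR] at hSQ ⊢
  rw [huniq _ hSQ]

end ParameterClass

theorem statement18_general (p : ℝ) :
    (∀ P : Matrix (Fin 2) (Fin 2) ℝ, ∀ ψ : ℝ, PClass p P ψ →
      ∃! Qφ : Matrix (Fin 2) (Fin 2) ℝ × ℝ,
        (PClass p Qφ.1 Qφ.2 ∧ Qφ.1 0 1 = 0) ∧ approxRel p (P, ψ) Qφ) ∧
    (p ≠ 0 →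
      ∀ P : Matrix (Fin 2) (Fin 2) ℝ, ∀ ψ : ℝ, PClass p P ψ →
        ∃! Qφ : Matrix (Fin 2) (Fin 2) ℝ × ℝ,
          (PClass p Qφ.1 Qφ.2 ∧ Qφ.2 = 0) ∧ approxRel p (P, ψ) Qφ) := by
  refine ⟨fun P ψ h => h.existsUnique_approxRel _ ⟨0, by simp [offDiagRep], ?_⟩,
    fun hp P ψ h =>
      h.existsUnique_approxRel _ ⟨-psiInvariant p P ψ * P 0 0 / (2 * p), ?_, ?_⟩⟩
  · intro t ht
    simpa [offDiagRep] using ht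
  · have h0 := h.apply_zero_zero_pos.ne'
    simp only [offDiagRep]
    field_simp
    ring
  · intro t ht
    have h0 := h.apply_zero_zero_pos.ne'
    simp only [offDiagRep] at ht
    field_simp at ht ⊢
    linarith

/-- complete systems of representatives of 𝒫ₚ modulo ≈. -/
theorem statement18 (p : ℝ) (hp : -(1/2 : ℝ) < p) :
    (∀ P : Matrix (Fin 2) (Fin 2) ℝ, ∀ ψ : ℝ, PClass p P ψ →
      ∃! Qφ : Matrix (Fin 2) (Fin 2) ℝ × ℝ,
        (PClass p Qφ.1 Qφ.2 ∧ Qφ.1 0 1 = 0) ∧ approxRel p (P, ψ) Qφ) ∧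
    (p ≠ 0 →
      ∀ P : Matrix (Fin 2) (Fin 2) ℝ, ∀ ψ : ℝ, PClass p P ψ →
        ∃! Qφ : Matrix (Fin 2) (Fin 2) ℝ × ℝ,
          (PClass p Qφ.1 Qφ.2 ∧ Qφ.2 = 0) ∧ approxRel p (P, ψ) Qφ) :=
  statement18_general p
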